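/- Let μ ∈ ℂ. For every integer k ≥ 1 and every x ∈ ℂ, the k-th derivative of the entire function x ↦ F(μ;q,x) satisfies F^{(k)}(μ;q,x) = (−1)^k·(q^μ;q)_k·F(μ+k; q, x). -/

import Mathlib

/-!
`F(μ;q,·)` is a power series whose coefficients are bounded by `(1 + |q^μ|)^n / n!`, so it is
entire and may be differentiated termwise. Differentiating shifts the index, and
`(a;q)_{n+1} = (1 - a) (aq;q)_n` with `q^μ q = q^{μ+1}` turns the shifted series into
`-(1 - q^μ) F(μ+1;q,·)`. Iterating `k` times gives the claim.
-/

/-- `(a;c)_n = ∏_{j=0}^{n-1} (1 - a c^j)`. -/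
noncomputable def qPoch (a c : ℂ) (n : ℕ) : ℂ := ∏ j ∈ Finset.range n, (1 - a * c ^ j)

/-- `(a;c)_∞ = ∏_{j=0}^{∞} (1 - a c^j)`. -/
noncomputable def qPochInf (a c : ℂ) : ℂ := ∏' j : ℕ, (1 - a * c ^ j)

/-- `q^μ := exp (μ log q)` for real `q > 0` and complex `μ`. -/
noncomputable def qpow (q : ℝ) (μ : ℂ) : ℂ := Complex.exp (μ * Real.log q)

/-- `F(μ;q,x) = Σ_{n≥0} ((q^μ;q)_n / n!) (-x)^n`. -/
noncomputable def F (μ : ℂ) (q : ℝ) (x : ℂ) : ℂ :=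
  ∑' n : ℕ, qPoch (qpow q μ) (q : ℂ) n / (Nat.factorial n : ℂ) * (-x) ^ n

/-- `(a)_n = a (a+1) ⋯ (a+n-1)`. -/
noncomputable def poch (a : ℂ) (n : ℕ) : ℂ := ∏ j ∈ Finset.range n, (a + (j : ℂ))

/-- `G(a;q,x) = Σ_{n≥0} ((a)_n q^{n(n+1)/2} / (q;q)_n) (-x)^n`. -/
noncomputable def G (a : ℂ) (q : ℝ) (x : ℂ) : ℂ :=
  ∑' n : ℕ, poch a n * (q : ℂ) ^ (n * (n + 1) / 2) / qPoch (q : ℂ) (q : ℂ) n * (-x) ^ n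

open Finset

section PowerSeries

variable {a : ℕ → ℂ} {C : ℝ}

lemma summable_natCast_mul_pow_div_factorial (A : ℝ) :
    Summable fun n : ℕ => (n : ℝ) * A ^ n / n.factorial := by
  refine .of_norm_bounded (Real.summable_pow_div_factorial (2 * |A|)) fun n => ?_
  rw [Real.norm_eq_abs, abs_div, abs_mul, abs_pow, Nat.abs_cast, Nat.abs_cast, mul_pow]
  gcongr
  exact_mod_cast (Nat.lt_two_pow_self (n := n)).le

lemma norm_le_abs_pow_div_factorial (ha : ∀ n, ‖a n‖ ≤ C ^ n / n.factorial) (n : ℕ) :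
    ‖a n‖ ≤ |C| ^ n / n.factorial :=
  (ha n).trans <| div_le_div_of_nonneg_right ((le_abs_self _).trans_eq (abs_pow C n))
    n.factorial.cast_nonneg

lemma summable_mul_pow_of_norm_le_pow_div_factorial
    (ha : ∀ n, ‖a n‖ ≤ C ^ n / n.factorial) (z : ℂ) :
    Summable fun n => a n * z ^ n := by
  refine .of_norm_bounded (Real.summable_pow_div_factorial (|C| * ‖z‖)) fun n => ?_
  rw [norm_mul, norm_pow, mul_pow, mul_div_right_comm]
  gcongr
  exact norm_le_abs_pow_div_factorial ha n

lemma hasDerivAt_tsum_mul_pow_of_norm_le_pow_div_factorial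
    (ha : ∀ n, ‖a n‖ ≤ C ^ n / n.factorial) (x : ℂ) :
    HasDerivAt (fun z => ∑' n, a n * z ^ n) (∑' n, (n + 1) * a (n + 1) * x ^ n) x := by
  set R : ℝ := ‖x‖ + 1
  have hR : 1 ≤ R := by simp [R]
  have hx : x ∈ Metric.ball (0 : ℂ) R := by simp [R]
  have hbound : ∀ n, ∀ y ∈ Metric.ball (0 : ℂ) R,
      ‖a n * (n * y ^ (n - 1))‖ ≤ n * (|C| * R) ^ n / n.factorial := by
    intro n y hy
    have hyR : ‖y‖ ^ (n - 1) ≤ R ^ n :=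
      (pow_le_pow_left₀ (norm_nonneg y) (mem_ball_zero_iff.mp hy).le _).trans
        (pow_le_pow_right₀ hR (Nat.sub_le n 1))
    have han := norm_le_abs_pow_div_factorial ha n
    rw [norm_mul, norm_mul, norm_pow, Complex.norm_natCast, mul_pow]
    calc ‖a n‖ * (n * ‖y‖ ^ (n - 1)) ≤ |C| ^ n / n.factorial * (n * R ^ n) := by gcongr
      _ = n * (|C| ^ n * R ^ n) / n.factorial := by ring
  have hderiv := hasDerivAt_tsum_of_isPreconnected (summable_natCast_mul_pow_div_factorial _)
    Metric.isOpen_ball (convex_ball (0 : ℂ) R).isPreconnected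
    (fun n y _ => (hasDerivAt_pow n y).const_mul (a n)) hbound
    (Metric.mem_ball_self (by linarith)) (summable_mul_pow_of_norm_le_pow_div_factorial ha 0) hx
  have hsum : Summable fun n => a n * (n * x ^ (n - 1)) :=
    .of_norm_bounded (summable_natCast_mul_pow_div_factorial _) fun n => hbound n x hx
  have hshift : ∑' n, a n * (n * x ^ (n - 1)) = ∑' n, (n + 1) * a (n + 1) * x ^ n := by
    rw [hsum.tsum_eq_zero_add]
    simp only [Nat.cast_zero, zero_mul, mul_zero, zero_add, Nat.cast_succ, Nat.add_sub_cancel]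
    exact tsum_congr fun n => by ring
  rwa [hshift] at hderiv

end PowerSeries

lemma qPoch_succ (a c : ℂ) (n : ℕ) :
    qPoch a c (n + 1) = (1 - a) * qPoch (a * c) c n := by
  simp only [qPoch, prod_range_succ', pow_zero, mul_one, pow_succ, mul_assoc, mul_comm c]
  ring

lemma norm_qPoch_le (a : ℂ) {c : ℂ} (hc : ‖c‖ ≤ 1) (n : ℕ) :
    ‖qPoch a c n‖ ≤ (1 + ‖a‖) ^ n := by
  rw [qPoch, norm_prod]
  refine (prod_le_prod (fun _ _ => norm_nonneg _) fun j _ => ?_).trans_eq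
    (by rw [prod_const, card_range])
  refine (norm_sub_le 1 (a * c ^ j)).trans ?_
  rw [norm_one, norm_mul, norm_pow]
  gcongr
  exact mul_le_of_le_one_right (norm_nonneg a) (pow_le_one₀ (norm_nonneg c) hc)

lemma qpow_add_one {q : ℝ} (hq : 0 < q) (μ : ℂ) : qpow q (μ + 1) = qpow q μ * q := by
  rw [qpow, qpow, add_mul, one_mul, Complex.exp_add, ← Complex.ofReal_exp, Real.exp_log hq]

noncomputable def FCoeff (μ : ℂ) (q : ℝ) (n : ℕ) : ℂ :=
  qPoch (qpow q μ) q n / n.factorial * (-1) ^ n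

lemma F_eq_tsum_FCoeff (μ : ℂ) (q : ℝ) (x : ℂ) :
    F μ q x = ∑' n, FCoeff μ q n * x ^ n :=
  tsum_congr fun n => by rw [FCoeff, neg_pow]; ring

lemma norm_FCoeff_le (μ : ℂ) {q : ℝ} (hq0 : 0 ≤ q) (hq1 : q ≤ 1) (n : ℕ) :
    ‖FCoeff μ q n‖ ≤ (1 + ‖qpow q μ‖) ^ n / n.factorial := by
  rw [FCoeff, norm_mul, norm_div, norm_pow, norm_neg, norm_one, one_pow, mul_one,
    Complex.norm_natCast]
  gcongr
  exact norm_qPoch_le _ (by rwa [Complex.norm_real, Real.norm_of_nonneg hq0]) n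

lemma natCast_add_one_mul_FCoeff_succ {q : ℝ} (hq : 0 < q) (μ : ℂ) (n : ℕ) :
    (n + 1) * FCoeff μ q (n + 1) = -(1 - qpow q μ) * FCoeff (μ + 1) q n := by
  rw [FCoeff, FCoeff, qPoch_succ, qpow_add_one hq, Nat.factorial_succ, Nat.cast_mul,
    Nat.cast_succ]
  have : (n.factorial : ℂ) ≠ 0 := Nat.cast_ne_zero.mpr n.factorial_ne_zero
  field_simp
  ring

lemma hasDerivAt_F {q : ℝ} (hq0 : 0 < q) (hq1 : q < 1) (μ x : ℂ) :
    HasDerivAt (F μ q) (-(1 - qpow q μ) * F (μ + 1) q x) x := by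
  have hF : F μ q = fun z => ∑' n, FCoeff μ q n * z ^ n := funext (F_eq_tsum_FCoeff μ q)
  have hderiv := hasDerivAt_tsum_mul_pow_of_norm_le_pow_div_factorial
    (norm_FCoeff_le μ hq0.le hq1.le) x
  rw [← hF] at hderiv
  convert hderiv using 1
  simp only [natCast_add_one_mul_FCoeff_succ hq0, mul_assoc, tsum_mul_left,
    F_eq_tsum_FCoeff]

theorem stmt7_general (q : ℝ) (hq0 : 0 < q) (hq1 : q < 1)
    (μ : ℂ) (k : ℕ) (x : ℂ) :
    iteratedDeriv k (F μ q) x =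
      (-1 : ℂ) ^ k * qPoch (qpow q μ) (q : ℂ) k * F (μ + (k : ℂ)) q x := by
  induction k generalizing μ x with
  | zero => simp [qPoch]
  | succ k ih =>
    have hderiv : deriv (F μ q) = fun y => -(1 - qpow q μ) * F (μ + 1) q y :=
      funext fun y => (hasDerivAt_F hq0 hq1 μ y).deriv
    rw [iteratedDeriv_succ', hderiv, iteratedDeriv_const_mul_field, ih, qPoch_succ,
      ← qpow_add_one hq0, Nat.cast_succ, ← add_assoc, add_right_comm μ]
    ring

/-- `∂_x^k F(μ;q,x) = (-1)^k (q^μ;q)_k F(μ+k;q,x)` for every `k ≥ 1`. -/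
theorem stmt7 (q : ℝ) (hq0 : 0 < q) (hq1 : q < 1)
    (μ : ℂ) (k : ℕ) (hk : 1 ≤ k) (x : ℂ) :
    iteratedDeriv k (F μ q) x =
      (-1 : ℂ) ^ k * qPoch (qpow q μ) (q : ℂ) k * F (μ + (k : ℂ)) q x :=
  stmt7_general q hq0 hq1 μ k x
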